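/- Define h : R² → L^4 by h(u,v) = (cosh u·cosh v, sinh v·cos v, sinh v·sin v, sinh u·cosh v). Then: (1) ⟨h, h⟩ = -1 (h maps into the hyperbolic space H³); (2) ⟨h_u, h_u⟩ = ⟨h_v, h_v⟩ = cosh²v and ⟨h_u, h_v⟩ = 0 (h is conformal with metric cosh²v·(du²+dv²)); and (3) ⟨h_uu + h_vv, h_uu + h_vv⟩ = 0 (the mean curvature vector is lightlike). -/
import Mathlib

open Real

-- u-direction derivatives
lemma dU0 (c : ℝ) : deriv (fun t : ℝ => Real.cosh t * c) = fun t => Real.sinh t * c := by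
  funext t; exact ((Real.hasDerivAt_cosh t).mul_const c).deriv

lemma dU3 (c : ℝ) : deriv (fun t : ℝ => Real.sinh t * c) = fun t => Real.cosh t * c := by
  funext t; exact ((Real.hasDerivAt_sinh t).mul_const c).deriv

lemma dConst (c : ℝ) : deriv (fun _ : ℝ => c) = fun _ => 0 := by
  funext t; simp

-- v-direction
lemma dV0 (c : ℝ) : deriv (fun t : ℝ => c * Real.cosh t) = fun t => c * Real.sinh t := by
  funext t; exact ((Real.hasDerivAt_cosh t).const_mul c).deriv

lemma dV0' (c : ℝ) : deriv (fun t : ℝ => c * Real.sinh t) = fun t => c * Real.cosh t := by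
  funext t; exact ((Real.hasDerivAt_sinh t).const_mul c).deriv

lemma dV1 : deriv (fun t : ℝ => Real.sinh t * Real.cos t)
    = fun t => Real.cosh t * Real.cos t + Real.sinh t * (-Real.sin t) := by
  funext t; exact ((Real.hasDerivAt_sinh t).mul (Real.hasDerivAt_cos t)).deriv

lemma dV2 : deriv (fun t : ℝ => Real.sinh t * Real.sin t)
    = fun t => Real.cosh t * Real.sin t + Real.sinh t * Real.cos t := by
  funext t; exact ((Real.hasDerivAt_sinh t).mul (Real.hasDerivAt_sin t)).deriv

lemma dV1' : deriv (fun t : ℝ => Real.cosh t * Real.cos t + Real.sinh t * (-Real.sin t))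
    = fun t => Real.sinh t * Real.cos t + Real.cosh t * (-Real.sin t)
        + (Real.cosh t * (-Real.sin t) + Real.sinh t * (-Real.cos t)) := by
  funext t
  exact (((Real.hasDerivAt_cosh t).mul (Real.hasDerivAt_cos t)).add
    ((Real.hasDerivAt_sinh t).mul (Real.hasDerivAt_sin t).neg)).deriv

lemma dV2' : deriv (fun t : ℝ => Real.cosh t * Real.sin t + Real.sinh t * Real.cos t)
    = fun t => Real.sinh t * Real.sin t + Real.cosh t * Real.cos t
        + (Real.cosh t * Real.cos t + Real.sinh t * (-Real.sin t)) := by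
  funext t
  exact (((Real.hasDerivAt_cosh t).mul (Real.hasDerivAt_sin t)).add
    ((Real.hasDerivAt_sinh t).mul (Real.hasDerivAt_cos t))).deriv

/-- The Lorentzian bilinear form on `ℝ⁴`. -/
noncomputable def lorR (x y : Fin 4 → ℝ) : ℝ :=
  -(x 0 * y 0) + x 1 * y 1 + x 2 * y 2 + x 3 * y 3

/-- `h(u,v) = (cosh u cosh v, sinh v cos v, sinh v sin v, sinh u cosh v)`. -/
noncomputable def hmap (u v : ℝ) : Fin 4 → ℝ :=
  ![Real.cosh u * Real.cosh v, Real.sinh v * Real.cos v,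
    Real.sinh v * Real.sin v, Real.sinh u * Real.cosh v]

theorem stmt18 (u v : ℝ) :
    lorR (hmap u v) (hmap u v) = -1 ∧
    lorR (fun i => deriv (fun t => hmap t v i) u)
         (fun i => deriv (fun t => hmap t v i) u) = Real.cosh v ^ 2 ∧
    lorR (fun i => deriv (fun t => hmap u t i) v)
         (fun i => deriv (fun t => hmap u t i) v) = Real.cosh v ^ 2 ∧
    lorR (fun i => deriv (fun t => hmap t v i) u)
         (fun i => deriv (fun t => hmap u t i) v) = 0 ∧
    lorR (fun i => deriv (deriv (fun t => hmap t v i)) u +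
                   deriv (deriv (fun t => hmap u t i)) v)
         (fun i => deriv (deriv (fun t => hmap t v i)) u +
                   deriv (deriv (fun t => hmap u t i)) v) = 0 := by
  have hc := Real.cosh_sq u
  have hc2 := Real.cosh_sq v
  have hs := Real.sin_sq_add_cos_sq v
  refine ⟨?_, ?_, ?_, ?_, ?_⟩ <;>
    simp only [lorR, hmap, Matrix.cons_val_zero, Matrix.cons_val_one, Matrix.head_cons,
      Matrix.cons_val_two, Matrix.tail_cons, Matrix.cons_val_three,
      dU0, dU3, dConst, dV0, dV0', dV1, dV2, dV1', dV2'] <;>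
    nlinarith [hc, hc2, hs, sq_nonneg (Real.cosh v)]
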